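/- The Verschiebung V : W_{r-1}(K) → W_r(K) maps fil_n W_{r-1}(K) into fil_n W_r(K), and there is an exact sequence 0 → fil_n W_{r-1}(K) → fil_n W_r(K) → fil_{⌊n/p^{r-1}⌋} W_1(K) → 0, where the second map is induced by V and the third by projecting onto the top coordinate. -/

import Mathlib

/-- The Brylinski filtration `fil_n W_r(K)` on Witt vectors of length `r` over a discrete
valuation field `K`: writing a Witt vector of length `r` as `(f_{r-1}, …, f_0)` (so that the
paper's coordinate `f_i` is the Witt coordinate `coeff (r-1-i)`), it consists of those vectors
with `p^i · v(f_i) ≥ -n` for all `0 ≤ i ≤ r-1`. -/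
def filWitt (p : ℕ) [Fact p.Prime] {K : Type*} [Field K]
    (v : AddValuation K (WithTop ℤ)) (r n : ℕ) : Set (TruncatedWittVector p r K) :=
  {x | ∀ i : Fin r, ((-(n : ℤ) : ℤ) : WithTop ℤ) ≤ (p ^ (r - 1 - (i : ℕ))) • v (x.coeff i)}

/-- The Verschiebung `V : W_r(K) → W_{r+1}(K)`, prepending a zero coordinate: in the paper's
notation it sends `(f_{r-1},…,f_0)` to `(0,f_{r-1},…,f_0)`; in Witt coordinates,
`(V x).coeff 0 = 0` and `(V x).coeff (j+1) = x.coeff j`. -/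
def verWitt (p : ℕ) [Fact p.Prime] {K : Type*} [Field K] {r : ℕ}
    (x : TruncatedWittVector p r K) : TruncatedWittVector p (r + 1) K :=
  TruncatedWittVector.mk p fun i =>
    if h : (i : ℕ) = 0 then 0 else x.coeff ⟨(i : ℕ) - 1, by have := i.isLt; omega⟩

/-!
The Verschiebung shifts the coordinates of a Witt vector up by one without changing the weight
`p^i` attached to the coordinate `f_i`, so `V x ∈ fil_n` iff `x ∈ fil_n`; and the vectors with
vanishing top coordinate `f_r` are exactly the image of `V`. The top coordinate carries the
weight `p^r`, so a vector whose only nonzero coordinate is `f_r = f` lies in `fil_n` as soon as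
`v(f) ≥ -⌊n/p^r⌋`, because `p^r ⌊n/p^r⌋ ≤ n`.
-/

theorem WithTop.nsmul_top {α : Type*} [AddMonoid α] {k : ℕ} (hk : k ≠ 0) :
    k • (⊤ : WithTop α) = ⊤ := by
  obtain ⟨m, rfl⟩ := Nat.exists_eq_succ_of_ne_zero hk
  rw [succ_nsmul, WithTop.add_top]

theorem neg_le_nsmul_of_neg_div_le {a : WithTop ℤ} (m n : ℕ)
    (ha : ((-(n / m : ℕ) : ℤ) : WithTop ℤ) ≤ a) : ((-n : ℤ) : WithTop ℤ) ≤ m • a :=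
  calc ((-n : ℤ) : WithTop ℤ)
      ≤ ((m • -(n / m : ℕ) : ℤ) : WithTop ℤ) := by
        have : ((n / m : ℕ) : ℤ) * m ≤ n := mod_cast Nat.div_mul_le_self n m
        rw [WithTop.coe_le_coe, nsmul_eq_mul]
        linarith
    _ = m • ((-(n / m : ℕ) : ℤ) : WithTop ℤ) := WithTop.coe_nsmul _ _
    _ ≤ m • a := nsmul_le_nsmul_right ha m

section Verschiebung

variable {p : ℕ} [Fact p.Prime] {K : Type*} [Field K] {r : ℕ}

@[simp]
theorem coeff_verWitt_zero (x : TruncatedWittVector p r K) : (verWitt p x).coeff 0 = 0 := rfl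

@[simp]
theorem coeff_verWitt_succ (x : TruncatedWittVector p r K) (j : Fin r) :
    (verWitt p x).coeff j.succ = x.coeff j := rfl

theorem verWitt_injective :
    Function.Injective (verWitt p : TruncatedWittVector p r K → TruncatedWittVector p (r + 1) K) :=
  fun x y hxy => TruncatedWittVector.ext fun j => by
    rw [← coeff_verWitt_succ x, hxy, coeff_verWitt_succ]

theorem exists_verWitt_eq_of_coeff_zero {y : TruncatedWittVector p (r + 1) K}
    (hy : y.coeff 0 = 0) : ∃ x, verWitt p x = y :=
  ⟨TruncatedWittVector.mk p fun j => y.coeff j.succ, TruncatedWittVector.ext fun i => by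
    cases i using Fin.cases <;> simp [hy, TruncatedWittVector.coeff_mk]⟩

theorem mem_filWitt_succ_iff (v : AddValuation K (WithTop ℤ)) (n : ℕ)
    (y : TruncatedWittVector p (r + 1) K) :
    y ∈ filWitt p v (r + 1) n ↔
      ((-n : ℤ) : WithTop ℤ) ≤ p ^ r • v (y.coeff 0) ∧
      ∀ j : Fin r, ((-n : ℤ) : WithTop ℤ) ≤ p ^ (r - 1 - (j : ℕ)) • v (y.coeff j.succ) := by
  simp only [filWitt, Set.mem_ofPred_eq, Fin.forall_fin_succ, Fin.val_zero, Fin.val_succ]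
  refine and_congr (by rw [Nat.add_sub_cancel, Nat.sub_zero]) (forall_congr' fun j => ?_)
  rw [show r + 1 - 1 - (j + 1) = r - 1 - j by omega]

theorem pow_nsmul_valuation_zero (v : AddValuation K (WithTop ℤ)) (k : ℕ) :
    p ^ k • v (0 : K) = ⊤ := by
  rw [AddValuation.map_zero, WithTop.nsmul_top (pow_ne_zero k (Fact.out : p.Prime).ne_zero)]

theorem verWitt_mem_filWitt_iff (v : AddValuation K (WithTop ℤ)) (n : ℕ)
    (x : TruncatedWittVector p r K) :
    verWitt p x ∈ filWitt p v (r + 1) n ↔ x ∈ filWitt p v r n := by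
  simp only [mem_filWitt_succ_iff, coeff_verWitt_zero, coeff_verWitt_succ,
    pow_nsmul_valuation_zero, le_top, true_and]
  rfl

theorem exists_mem_filWitt_coeff_zero_eq (v : AddValuation K (WithTop ℤ)) (n : ℕ) {f : K}
    (hf : ((-(n / p ^ r : ℕ) : ℤ) : WithTop ℤ) ≤ v f) :
    ∃ y ∈ filWitt p v (r + 1) n, y.coeff 0 = f := by
  refine ⟨TruncatedWittVector.mk p (Fin.cons f 0), (mem_filWitt_succ_iff v n _).2 ⟨?_, ?_⟩, ?_⟩
  · simpa [TruncatedWittVector.coeff_mk] using neg_le_nsmul_of_neg_div_le _ _ hf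
  · simp only [TruncatedWittVector.coeff_mk, Fin.cons_succ, Pi.zero_apply,
      pow_nsmul_valuation_zero, le_top, implies_true]
  · simp [TruncatedWittVector.coeff_mk]

end Verschiebung

theorem verWitt_filWitt_exact_general (p : ℕ) [Fact p.Prime] (K : Type*) [Field K]
    (v : AddValuation K (WithTop ℤ)) (r n : ℕ) :
    (∀ x ∈ filWitt p v r n, verWitt p x ∈ filWitt p v (r + 1) n) ∧
    (∀ x y : TruncatedWittVector p r K, verWitt p x = verWitt p y → x = y) ∧
    (∀ y ∈ filWitt p v (r + 1) n,
      ((∃ x ∈ filWitt p v r n, verWitt p x = y) ↔ y.coeff 0 = 0)) ∧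
    (∀ f : K, ((-(↑(n / p ^ r) : ℤ) : ℤ) : WithTop ℤ) ≤ v f →
      ∃ y ∈ filWitt p v (r + 1) n, y.coeff 0 = f) := by
  refine ⟨fun x hx => (verWitt_mem_filWitt_iff v n x).2 hx, fun x y hxy => verWitt_injective hxy,
    fun y hy => ⟨?_, fun hy0 => ?_⟩, fun f hf => exists_mem_filWitt_coeff_zero_eq v n hf⟩
  · rintro ⟨x, -, rfl⟩
    exact coeff_verWitt_zero x
  · obtain ⟨x, rfl⟩ := exists_verWitt_eq_of_coeff_zero hy0
    exact ⟨x, (verWitt_mem_filWitt_iff v n x).1 hy, rfl⟩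

/-- The Verschiebung `V : W_r(K) → W_{r+1}(K)` maps `fil_n W_r(K)` into `fil_n W_{r+1}(K)`,
and there is an exact sequence
`0 → fil_n W_r(K) → fil_n W_{r+1}(K) → fil_{⌊n/p^r⌋} W_1(K) → 0`,
where the second map is induced by `V` and the third by projecting onto the top coordinate
(the coordinate `f_r`, i.e. Witt coordinate `0`); here
`fil_m W_1(K) = {f ∈ K : v(f) ≥ -m}`. -/
theorem verWitt_filWitt_exact (p : ℕ) [Fact p.Prime] (K : Type*) [Field K] [CharP K p]
    (v : AddValuation K (WithTop ℤ)) (hdisc : Function.Surjective v) (r n : ℕ) :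
    (∀ x ∈ filWitt p v r n, verWitt p x ∈ filWitt p v (r + 1) n) ∧
    (∀ x y : TruncatedWittVector p r K, verWitt p x = verWitt p y → x = y) ∧
    (∀ y ∈ filWitt p v (r + 1) n,
      ((∃ x ∈ filWitt p v r n, verWitt p x = y) ↔ y.coeff 0 = 0)) ∧
    (∀ f : K, ((-(↑(n / p ^ r) : ℤ) : ℤ) : WithTop ℤ) ≤ v f →
      ∃ y ∈ filWitt p v (r + 1) n, y.coeff 0 = f) :=
  verWitt_filWitt_exact_general p K v r n
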